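/- If F : C^op → D is a sheaf for the topology T (satisfies descent along all T-covering families), then F satisfies descent along every morphism f : X → Y that admits T-local sections. -/

import Mathlib

open CategoryTheory CategoryTheory.Limits Opposite

universe v u v' u'

variable {C : Type u} [Category.{v} C] [HasFiniteWidePullbacks C]
variable {D : Type u'} [Category.{v'} D]

/-- The cone (in `Cᵒᵖ`) on the Čech nerve of `f : X ⟶ Y`, with apex `Y`, given by the
augmentation of the Čech nerve. -/
@[simps]
noncomputable def cechCone {X Y : C} (f : X ⟶ Y) :
    Cone (Arrow.mk f).cechNerve.rightOp where
  pt := op Y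
  π :=
    { app := fun n => ((Arrow.mk f).augmentedCechNerve.hom.app (op n)).op
      naturality := fun m n g => by
        apply Quiver.Hom.unop_inj
        exact ((Arrow.mk f).augmentedCechNerve.hom.naturality g.op).symm }

/-- `f` satisfies `F`-descent: `F` applied to the augmented Čech nerve of `f` is a
limit diagram. -/
def FDescent (F : Cᵒᵖ ⥤ D) {X Y : C} (f : X ⟶ Y) : Prop :=
  Nonempty (IsLimit (F.mapCone (cechCone f)))

/-!
Descent along `g : A ⟶ B` only involves the first two levels of the Čech nerve, i.e. it says that
`F(B) → F(A) ⇉ F(A ×_B A)` is an equalizer. Suppose the covering `φ : Ỹ ⟶ Y` factors as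
`ψ ≫ f` (which is what a section of the base change provides). A matching family on `X` pulls back
along `ψ` to a matching family for `φ`, which descends to `F(Y)`. That the descended element
restricts back to the given one is checked after pulling back along the covering
`Ỹ ×_Y X ⟶ X`, along which `F` is injective; uniqueness holds because `F` is injective along `φ`.
-/

open Simplicial SimplexCategory

namespace SimplexCategory

variable {G : SimplexCategory ⥤ D}

/-- Any two vertices of `⦋n⦌` are joined by an edge, so all maps out of `⦋0⦌` agree after `t`. -/
lemma comp_map_eq_of_comp_map_δ_eq {W : D} {t : W ⟶ G.obj ⦋0⦌}
    (ht : t ≫ G.map (δ 0) = t ≫ G.map (δ 1)) {n : SimplexCategory} (u v : ⦋0⦌ ⟶ n) :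
    t ≫ G.map u = t ≫ G.map v := by
  have key (i : Fin (n.len + 1)) : t ≫ G.map (const ⦋0⦌ n i) = t ≫ G.map (const ⦋0⦌ n 0) := by
    have h0 : δ 1 ≫ mkOfLe 0 i (Fin.zero_le i) = const ⦋0⦌ n 0 := Hom.ext_zero_left _ _
    have h1 : δ 0 ≫ mkOfLe 0 i (Fin.zero_le i) = const ⦋0⦌ n i := Hom.ext_zero_left _ _
    rw [← h0, ← h1, G.map_comp, G.map_comp, reassoc_of% ht]
  rw [eq_const_of_zero u, eq_const_of_zero v]
  exact (key _).trans (key _).symm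

def forkOfCone (c : Cone G) : Fork (G.map (δ (0 : Fin 2))) (G.map (δ 1)) :=
  Fork.ofι (c.π.app ⦋0⦌) ((c.w (δ 0)).trans (c.w (δ 1)).symm)

@[simps]
def coneOfFork (s : Fork (G.map (δ (0 : Fin 2))) (G.map (δ 1))) : Cone G where
  pt := s.pt
  π.app n := s.ι ≫ G.map (const ⦋0⦌ n 0)
  π.naturality m n g := by
    simpa [← G.map_comp] using comp_map_eq_of_comp_map_δ_eq s.condition _ _

noncomputable def isLimitEquivIsLimitForkOfCone (c : Cone G) :
    IsLimit c ≃ IsLimit (forkOfCone c) := by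
  refine equivOfSubsingletonOfSubsingleton (fun h => ?_) (fun h => ?_)
  · refine Fork.IsLimit.mk _ (fun s => h.lift (coneOfFork s)) (fun s => ?_) (fun s m hm => ?_)
    · refine (h.fac (coneOfFork s) ⦋0⦌).trans ?_
      rw [coneOfFork_π_app, hom_zero_zero (const ⦋0⦌ ⦋0⦌ 0), G.map_id, Category.comp_id]
    · refine h.uniq (coneOfFork s) m fun n => ?_
      rw [← c.w (const ⦋0⦌ n 0)]
      exact (Category.assoc _ _ _).symm.trans (hm =≫ _)
  · exact
    { lift s := h.lift (forkOfCone s)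
      fac s n := by
        rw [← c.w (const ⦋0⦌ n 0), ← s.w (const ⦋0⦌ n 0)]
        exact (Category.assoc _ _ _).symm.trans (Fork.IsLimit.lift_ι h (t := forkOfCone s) =≫ _)
      uniq s m hm :=
        Fork.IsLimit.hom_ext h ((hm ⦋0⦌).trans (Fork.IsLimit.lift_ι h (t := forkOfCone s)).symm) }

end SimplexCategory

namespace CategoryTheory.Limits

variable {A B : C} (g : A ⟶ B)

noncomputable def widePullbackFinOneIso : widePullback B (fun _ : Fin 1 => A) (fun _ => g) ≅ A where
  hom := WidePullback.π _ 0
  inv := WidePullback.lift g (fun _ => 𝟙 A) (fun _ => Category.id_comp g)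
  hom_inv_id := WidePullback.hom_ext _ _ _
    (fun j => by fin_cases j; simp [WidePullback.lift_π]) (by simp [WidePullback.lift_base])
  inv_hom_id := WidePullback.lift_π _ _ _ _ _

lemma widePullbackFinOneIso_hom_comp :
    (widePullbackFinOneIso g).hom ≫ g = WidePullback.base _ :=
  WidePullback.π_arrow _ _

noncomputable def widePullbackFinTwoIso :
    widePullback B (fun _ : Fin 2 => A) (fun _ => g) ≅ pullback g g where
  hom := pullback.lift (WidePullback.π _ 0) (WidePullback.π _ 1) (by simp)
  inv := WidePullback.lift (pullback.fst g g ≫ g) ![pullback.fst g g, pullback.snd g g]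
    (fun i => by fin_cases i <;> simp [pullback.condition])
  hom_inv_id := WidePullback.hom_ext _ _ _
    (fun j => by
      rw [Category.assoc, WidePullback.lift_π, Category.id_comp]
      fin_cases j
      exacts [pullback.lift_fst _ _ _, pullback.lift_snd _ _ _])
    (by
      rw [Category.assoc, WidePullback.lift_base, ← Category.assoc, pullback.lift_fst,
        Category.id_comp, WidePullback.π_arrow])
  inv_hom_id := pullback.hom_ext
    (by rw [Category.assoc, pullback.lift_fst, WidePullback.lift_π, Category.id_comp]; rfl)
    (by rw [Category.assoc, pullback.lift_snd, WidePullback.lift_π, Category.id_comp]; rfl)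

end CategoryTheory.Limits

namespace CategoryTheory.Arrow

variable {A B : C} (g : A ⟶ B)

lemma cechNerve_map_δ_zero_comp_widePullbackFinOneIso_hom :
    (Arrow.mk g).cechNerve.map (δ 0).op ≫ (widePullbackFinOneIso g).hom =
      (widePullbackFinTwoIso g).hom ≫ pullback.snd g g := by
  rw [widePullbackFinTwoIso, pullback.lift_snd]
  exact WidePullback.lift_π _ _ _ _ _

lemma cechNerve_map_δ_one_comp_widePullbackFinOneIso_hom :
    (Arrow.mk g).cechNerve.map (δ 1).op ≫ (widePullbackFinOneIso g).hom =
      (widePullbackFinTwoIso g).hom ≫ pullback.fst g g := by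
  rw [widePullbackFinTwoIso, pullback.lift_fst]
  exact WidePullback.lift_π _ _ _ _ _

end CategoryTheory.Arrow

section CechFork

variable (F : Cᵒᵖ ⥤ D) {A B : C} (g : A ⟶ B)

-- The explicit `pt` makes `(cechFork F g).pt` reducibly `F.obj (op B)`, unlike `Fork.ofι`.
noncomputable abbrev cechFork :
    Fork (F.map (pullback.snd g g).op) (F.map (pullback.fst g g).op) where
  pt := F.obj (op B)
  π := (Fork.ofι (F.map g.op) (by simp only [← F.map_comp, ← op_comp, pullback.condition])).π

@[simp]
lemma cechFork_ι : (cechFork F g).ι = F.map g.op := rfl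

noncomputable def isLimitCechForkEquivIsLimitForkOfCone :
    IsLimit (cechFork F g) ≃ IsLimit (SimplexCategory.forkOfCone (F.mapCone (cechCone g))) :=
  Fork.isLimitEquivOfIsos _ _ (F.mapIso (widePullbackFinOneIso g).op)
    (F.mapIso (widePullbackFinTwoIso g).op) (Iso.refl _)
    (by simpa [← F.map_comp, ← op_comp] using
      congrArg (fun k => F.map k.op) (Arrow.cechNerve_map_δ_zero_comp_widePullbackFinOneIso_hom g))
    (by simpa [← F.map_comp, ← op_comp] using
      congrArg (fun k => F.map k.op) (Arrow.cechNerve_map_δ_one_comp_widePullbackFinOneIso_hom g))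
    (by
      refine (Category.id_comp _).trans ?_
      show F.map _ = F.map g.op ≫ F.map (widePullbackFinOneIso g).hom.op
      rw [← F.map_comp, ← op_comp, widePullbackFinOneIso_hom_comp]
      rfl)

lemma fDescent_iff_nonempty_isLimit_cechFork :
    FDescent F g ↔ Nonempty (IsLimit (cechFork F g)) :=
  ((SimplexCategory.isLimitEquivIsLimitForkOfCone _).trans
    (isLimitCechForkEquivIsLimitForkOfCone F g).symm).nonempty_congr

variable {F g}

lemma comp_map_eq_of_comp_eq {W : D} {t : W ⟶ F.obj (op A)}
    (ht : t ≫ F.map (pullback.snd g g).op = t ≫ F.map (pullback.fst g g).op)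
    {Z : C} {a b : Z ⟶ A} (hab : a ≫ g = b ≫ g) : t ≫ F.map a.op = t ≫ F.map b.op := by
  calc t ≫ F.map a.op
      = t ≫ F.map (pullback.fst g g).op ≫ F.map (pullback.lift a b hab).op := by
        rw [← F.map_comp, ← op_comp, pullback.lift_fst]
    _ = t ≫ F.map (pullback.snd g g).op ≫ F.map (pullback.lift a b hab).op := by
        rw [reassoc_of% ht]
    _ = t ≫ F.map b.op := by rw [← F.map_comp, ← op_comp, pullback.lift_snd]

end CechFork

noncomputable def isLimitCechForkOfFactorsThrough {F : Cᵒᵖ ⥤ D} {X Y Ytil : C} {f : X ⟶ Y}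
    {φ : Ytil ⟶ Y} (ψ : Ytil ⟶ X) (hψ : ψ ≫ f = φ)
    (hφ : IsLimit (cechFork F φ)) [Mono (F.map (pullback.snd φ f).op)] :
    IsLimit (cechFork F f) := by
  have restrict_cond (t : Fork (F.map (pullback.snd f f).op) (F.map (pullback.fst f f).op)) :
      (t.ι ≫ F.map ψ.op) ≫ F.map (pullback.snd φ φ).op =
        (t.ι ≫ F.map ψ.op) ≫ F.map (pullback.fst φ φ).op := by
    simp only [Category.assoc, ← F.map_comp, ← op_comp]
    exact comp_map_eq_of_comp_eq t.condition (by simp only [Category.assoc, hψ, pullback.condition])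
  have lift_ι (t : Fork (F.map (pullback.snd f f).op) (F.map (pullback.fst f f).op)) :
      Fork.IsLimit.lift hφ _ (restrict_cond t) ≫ F.map φ.op = t.ι ≫ F.map ψ.op :=
    Fork.IsLimit.lift_ι' hφ _ _
  refine Fork.IsLimit.mk _ (fun t => Fork.IsLimit.lift hφ _ (restrict_cond t)) (fun t => ?_)
    (fun t m hm => Fork.IsLimit.hom_ext hφ ?_)
  · rw [cechFork_ι, ← cancel_mono (F.map (pullback.snd φ f).op)]
    calc (Fork.IsLimit.lift hφ _ (restrict_cond t) ≫ F.map f.op) ≫ F.map (pullback.snd φ f).op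
        = (Fork.IsLimit.lift hφ _ (restrict_cond t) ≫ F.map φ.op) ≫
            F.map (pullback.fst φ f).op := by
          simp only [Category.assoc, ← F.map_comp, ← op_comp, pullback.condition]
      _ = t.ι ≫ F.map (pullback.fst φ f ≫ ψ).op := by
          rw [lift_ι, Category.assoc, ← F.map_comp, ← op_comp]
      _ = t.ι ≫ F.map (pullback.snd φ f).op :=
          comp_map_eq_of_comp_eq t.condition (by rw [Category.assoc, hψ, pullback.condition])
  · rw [cechFork_ι] at hm ⊢
    rw [lift_ι, ← hm, ← hψ, op_comp, F.map_comp, Category.assoc]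

theorem fDescent_of_admits_local_sections_general (F : Cᵒᵖ ⥤ D)
    (Cov : ∀ ⦃A B : C⦄, (A ⟶ B) → Prop)
    (hCov_base_change : ∀ ⦃A B B' : C⦄ (g : A ⟶ B) (h : B' ⟶ B),
      Cov g → Cov (pullback.snd g h : pullback g h ⟶ B'))
    (hsheaf : ∀ ⦃A B : C⦄ (g : A ⟶ B), Cov g → FDescent F g)
    {X Y : C} (f : X ⟶ Y)
    (Ytil : C) (φ : Ytil ⟶ Y) (hφ : Cov φ)
    (s : Ytil ⟶ pullback f φ) (hs : s ≫ (pullback.snd f φ : pullback f φ ⟶ Ytil) = 𝟙 Ytil) :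
    FDescent F f := by
  have hψ : (s ≫ pullback.fst f φ) ≫ f = φ := by
    rw [Category.assoc, pullback.condition, reassoc_of% hs]
  obtain ⟨hφ_lim⟩ := (fDescent_iff_nonempty_isLimit_cechFork F φ).1 (hsheaf φ hφ)
  obtain ⟨hq_lim⟩ := (fDescent_iff_nonempty_isLimit_cechFork F (pullback.snd φ f)).1
    (hsheaf _ (hCov_base_change φ f hφ))
  have : Mono (F.map (pullback.snd φ f).op) := mono_of_isLimit_fork hq_lim
  exact (fDescent_iff_nonempty_isLimit_cechFork F f).2
    ⟨isLimitCechForkOfFactorsThrough _ hψ hφ_lim⟩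

/-- if `F` is a sheaf for the topology `T` — i.e. `F` satisfies Čech
descent along `T`-covering morphisms, with `T`-coverings (`Cov`) stable under base
change — then `F` satisfies descent along every morphism `f : X ⟶ Y` admitting
`T`-local sections, i.e. such that there is a covering `φ : Ytil ⟶ Y` for which the
base change `Ytil ×_Y X → Ytil` of `f` admits a section. -/
theorem fDescent_of_admits_local_sections [HasProducts D] (F : Cᵒᵖ ⥤ D)
    (Cov : ∀ ⦃A B : C⦄, (A ⟶ B) → Prop)
    (hCov_base_change : ∀ ⦃A B B' : C⦄ (g : A ⟶ B) (h : B' ⟶ B),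
      Cov g → Cov (pullback.snd g h : pullback g h ⟶ B'))
    (hsheaf : ∀ ⦃A B : C⦄ (g : A ⟶ B), Cov g → FDescent F g)
    {X Y : C} (f : X ⟶ Y)
    (Ytil : C) (φ : Ytil ⟶ Y) (hφ : Cov φ)
    (s : Ytil ⟶ pullback f φ) (hs : s ≫ (pullback.snd f φ : pullback f φ ⟶ Ytil) = 𝟙 Ytil) :
    FDescent F f :=
  fDescent_of_admits_local_sections_general F Cov hCov_base_change hsheaf f Ytil φ hφ s hs
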